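/- Let X = {x₁ < ... < xₙ} and for I = {i₁ < ... < i_ℓ} ⊆ {1,...,n}, let FT(X)^I denote the set of elements of FT(X) whose set of right descents is exactly I (where i is a right descent of u if u·x_i = u). Then |FT(X)^I| = Π_{i∈I} a(i−1), where a(0)=1 and a(k)=a(k−1)²+a(k−1). In particular, the minimal ideal of FT(X) has cardinality a(1)·a(2)···a(n−1). -/

import Mathlib

/-- The defining relations of the free tree monoid `FT(X)`: `x·x = x` for every `x`, and
`y·x·y = y·x` whenever `x < y`. -/
def ftRel (X : Type*) [LinearOrder X] : FreeMonoid X → FreeMonoid X → Prop := fun a b =>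
  (∃ x : X, a = FreeMonoid.of x * FreeMonoid.of x ∧ b = FreeMonoid.of x) ∨
  (∃ x y : X, x < y ∧ a = FreeMonoid.of y * FreeMonoid.of x * FreeMonoid.of y ∧
    b = FreeMonoid.of y * FreeMonoid.of x)

/-- The free tree monoid `FT(X)` on a totally ordered alphabet `X`. -/
def FreeTreeMonoid (X : Type*) [LinearOrder X] :=
  (conGen (ftRel X)).Quotient

noncomputable instance (X : Type*) [LinearOrder X] : Monoid (FreeTreeMonoid X) :=
  Con.monoid (conGen (ftRel X))

/-- The image in `FT(X)` of the generator `x ∈ X`. -/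
def ftGen {X : Type*} [LinearOrder X] (x : X) : FreeTreeMonoid X :=
  (conGen (ftRel X)).mk' (FreeMonoid.of x)

/-- The counting sequence `a(0) = 1`, `a(k) = a(k-1)² + a(k-1)`. -/
def ftCount : ℕ → ℕ
  | 0 => 1
  | k + 1 => ftCount k ^ 2 + ftCount k

/-!
Let `t` be the largest generator. The relations give `t * a * t = t * a` for every `a`, so each
element of `FT(X ∪ {t})` is either an element `a` of `FT(X)` or a product `u * t * v` with
`u, v ∈ FT(X)`, and these normal forms multiply by an explicit rule. The right
descents of `a` are those of `a` in `FT(X)`, while `u * t * v` has the descent `t` together with the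
descents of `v`. Hence a descent class of `FT(X ∪ {t})` is a descent class of `FT(X)`, or a product
of `FT(X)` with one, according as it omits or contains `t`; and `|FT(X ∪ {t})| = a + a²` when
`|FT(X)| = a`.
-/

namespace FreeTreeMonoid

variable {X : Type*} [LinearOrder X]

theorem ftGen_mul_self (x : X) : ftGen x * ftGen x = ftGen x :=
  (Con.eq _).2 (ConGen.Rel.of _ _ (Or.inl ⟨x, rfl, rfl⟩))

theorem ftGen_mul_ftGen_mul_ftGen {x y : X} (h : x < y) :
    ftGen y * ftGen x * ftGen y = ftGen y * ftGen x :=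
  (Con.eq _).2 (ConGen.Rel.of _ _ (Or.inr ⟨x, y, h, rfl, rfl⟩))

@[elab_as_elim]
theorem induction_on {p : FreeTreeMonoid X → Prop} (u : FreeTreeMonoid X) (one : p 1)
    (ftGen_mul : ∀ x u, p u → p (ftGen x * u)) : p u := by
  obtain ⟨w, rfl⟩ := Con.mk'_surjective (c := conGen (ftRel X)) u
  induction w using FreeMonoid.inductionOn' with
  | one => exact one
  | of_mul x w ih => rw [map_mul]; exact ftGen_mul x _ ih

noncomputable instance [IsEmpty X] : Unique (FreeTreeMonoid X) where
  default := 1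
  uniq u := induction_on u rfl fun x _ _ => isEmptyElim x

variable {M : Type*} [Monoid M]

noncomputable def lift (f : X → M) (idem : ∀ x, IsIdempotentElem (f x))
    (rel : ∀ x y, x < y → f y * f x * f y = f y * f x) : FreeTreeMonoid X →* M :=
  Con.lift _ (FreeMonoid.lift f) <| Con.conGen_le.2 <| by
    rintro _ _ (⟨x, rfl, rfl⟩ | ⟨x, y, hxy, rfl, rfl⟩)
    · simpa [Con.ker_rel] using (idem x).eq
    · simpa [Con.ker_rel] using rel x y hxy

@[simp]
theorem lift_ftGen (f : X → M) (idem) (rel) (x : X) : lift f idem rel (ftGen x) = f x :=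
  FreeMonoid.lift_eval_of f x

theorem hom_ext {F G : FreeTreeMonoid X →* M} (h : ∀ x, F (ftGen x) = G (ftGen x)) : F = G :=
  MonoidHom.ext fun u => induction_on u (by simp) fun x u hu => by simp [h, hu]

noncomputable def map {Y : Type*} [LinearOrder Y] (f : X → Y) (hf : StrictMono f) :
    FreeTreeMonoid X →* FreeTreeMonoid Y :=
  lift (ftGen ∘ f) (fun x => ftGen_mul_self (f x)) fun _ _ h => ftGen_mul_ftGen_mul_ftGen (hf h)

@[simp]
theorem map_ftGen {Y : Type*} [LinearOrder Y] (f : X → Y) (hf : StrictMono f) (x : X) :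
    map f hf (ftGen x) = ftGen (f x) :=
  lift_ftGen _ _ _ x

theorem ftGen_mul_mul_ftGen_of_isTop {t : X} (ht : IsTop t) (u : FreeTreeMonoid X) :
    ftGen t * u * ftGen t = ftGen t * u := by
  induction u using induction_on with
  | one => simpa using ftGen_mul_self t
  | ftGen_mul x u ih =>
    rcases (ht x).lt_or_eq with hx | rfl
    · calc ftGen t * (ftGen x * u) * ftGen t
          = ftGen t * ftGen x * ftGen t * u * ftGen t := by
            rw [ftGen_mul_ftGen_mul_ftGen hx]; simp only [mul_assoc]
        _ = ftGen t * ftGen x * (ftGen t * u * ftGen t) := by simp only [mul_assoc]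
        _ = ftGen t * (ftGen x * u) := by
            rw [ih, ← mul_assoc, ftGen_mul_ftGen_mul_ftGen hx, mul_assoc]
    · rw [← mul_assoc, ftGen_mul_self, ih]

end FreeTreeMonoid

/-- The monoid obtained from `M` by adjoining an idempotent `top` with `top * m * top = top * m`
for all `m : M`: `sandwich u v` stands for `u * top * v`. -/
inductive AdjoinMax (M : Type*) where
  | of : M → AdjoinMax M
  | sandwich : M → M → AdjoinMax M

namespace AdjoinMax

variable {M : Type*}

def equivSum : AdjoinMax M ≃ M ⊕ M × M where
  toFun
    | of a => .inl a
    | sandwich u v => .inr (u, v)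
  invFun
    | .inl a => of a
    | .inr (u, v) => sandwich u v
  left_inv x := by cases x <;> rfl
  right_inv s := by rcases s with _ | ⟨_, _⟩ <;> rfl

instance [Finite M] : Finite (AdjoinMax M) := Finite.of_equiv _ equivSum.symm

theorem natCard_eq [Finite M] :
    Nat.card (AdjoinMax M) = Nat.card M + Nat.card M * Nat.card M := by
  rw [Nat.card_congr equivSum, Nat.card_sum, Nat.card_prod]

def rightFactor : AdjoinMax M → M
  | of a => a
  | sandwich _ v => v

variable [Monoid M]

instance : One (AdjoinMax M) := ⟨of 1⟩

instance : Mul (AdjoinMax M) where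
  mul
    | of a, of b => of (a * b)
    | of a, sandwich u v => sandwich (a * u) v
    | sandwich u v, of b => sandwich u (v * b)
    | sandwich u v, sandwich u' v' => sandwich u (v * u' * v')

@[simp] theorem one_def : (1 : AdjoinMax M) = of 1 := rfl
@[simp] theorem of_mul_of (a b : M) : of a * of b = of (a * b) := rfl
@[simp] theorem of_mul_sandwich (a u v : M) : of a * sandwich u v = sandwich (a * u) v := rfl
@[simp] theorem sandwich_mul_of (u v b : M) : sandwich u v * of b = sandwich u (v * b) := rfl
@[simp] theorem sandwich_mul_sandwich (u v u' v' : M) :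
    sandwich u v * sandwich u' v' = sandwich u (v * u' * v') := rfl

instance : Monoid (AdjoinMax M) where
  mul_assoc := by rintro (_ | ⟨_, _⟩) (_ | ⟨_, _⟩) (_ | ⟨_, _⟩) <;> simp [mul_assoc]
  one_mul := by rintro (_ | ⟨_, _⟩) <;> simp
  mul_one := by rintro (_ | ⟨_, _⟩) <;> simp

def ofHom : M →* AdjoinMax M where
  toFun := of
  map_one' := rfl
  map_mul' _ _ := rfl

@[simp] theorem ofHom_apply (a : M) : ofHom a = of a := rfl

def top : AdjoinMax M := sandwich 1 1

theorem sandwich_eq (u v : M) : sandwich u v = of u * top * of v := by simp [top]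

theorem top_mul_of_mul_top (m : M) : top * of m * top = top * of m := by simp [top]

@[simp] theorem sandwich_mul_top (u v : M) : sandwich u v * top = sandwich u v := by simp [top]

@[simp] theorem of_mul_top_ne (a : M) : of a * top ≠ of a := by simp [top]

variable {N : Type*} [Monoid N]

def lift (f : M →* N) (t : N) (h : ∀ m, t * f m * t = t * f m) : AdjoinMax M →* N where
  toFun
    | of a => f a
    | sandwich u v => f u * t * f v
  map_one' := f.map_one
  map_mul' := by
    rintro (a | ⟨u, v⟩) (b | ⟨u', v'⟩)
    · exact f.map_mul a b
    · simp only [map_mul, mul_assoc]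
    · simp only [map_mul, mul_assoc]
    · have := congrArg (f u * · * f v') (h (v * u'))
      simp only [map_mul, mul_assoc] at this ⊢
      exact this.symm

@[simp] theorem lift_of (f : M →* N) (t : N) (h) (a : M) : lift f t h (of a) = f a := rfl

@[simp] theorem lift_top (f : M →* N) (t : N) (h) : lift f t h top = t := by
  simp [lift, top]

theorem hom_ext {F G : AdjoinMax M →* N} (hof : F.comp ofHom = G.comp ofHom)
    (htop : F top = G top) : F = G := by
  have hof' (a : M) : F (of a) = G (of a) := DFunLike.congr_fun hof a
  ext (a | ⟨u, v⟩)
  · exact hof' a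
  · simp only [sandwich_eq, map_mul, hof', htop]

theorem mul_of_eq_self_iff (x : AdjoinMax M) (b : M) :
    x * of b = x ↔ x.rightFactor * b = x.rightFactor := by
  cases x <;> simp [rightFactor]

theorem card_rightFactor_mem_and_mul_top_eq_self (S : Set M) :
    Nat.card {x : AdjoinMax M // x.rightFactor ∈ S ∧ x * top = x} = Nat.card M * Nat.card S := by
  rw [← Nat.card_prod]
  refine (Nat.card_eq_of_bijective (fun p => ⟨sandwich p.1 p.2, p.2.2, sandwich_mul_top _ _⟩)
    ⟨?_, ?_⟩).symm
  · rintro ⟨u, v, hv⟩ ⟨u', v', hv'⟩ h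
    simp_all
  · rintro ⟨a | ⟨u, v⟩, hS, htop⟩
    · exact absurd htop (of_mul_top_ne a)
    · exact ⟨(u, ⟨v, hS⟩), rfl⟩

theorem card_rightFactor_mem_and_mul_top_ne_self (S : Set M) :
    Nat.card {x : AdjoinMax M // x.rightFactor ∈ S ∧ x * top ≠ x} = Nat.card S := by
  refine (Nat.card_eq_of_bijective (fun a => ⟨of a.1, a.2, of_mul_top_ne _⟩) ⟨?_, ?_⟩).symm
  · rintro ⟨a, ha⟩ ⟨b, hb⟩ h
    simp_all
  · rintro ⟨a | ⟨u, v⟩, hS, htop⟩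
    · exact ⟨⟨a, hS⟩, rfl⟩
    · exact absurd (sandwich_mul_top u v) htop

end AdjoinMax

namespace FreeTreeMonoid

open AdjoinMax

variable (n : ℕ)

noncomputable def splitLast : FreeTreeMonoid (Fin (n + 1)) →* AdjoinMax (FreeTreeMonoid (Fin n)) :=
  lift (Fin.lastCases top fun j => of (ftGen j))
    (Fin.lastCases (by simp [IsIdempotentElem, top])
      fun j => by simp [IsIdempotentElem, ftGen_mul_self])
    (Fin.lastCases (fun x h => absurd h (Fin.le_last x).not_gt) fun j =>
      Fin.lastCases (fun _ => by simpa using top_mul_of_mul_top (ftGen j)) fun i h => by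
        simpa using ftGen_mul_ftGen_mul_ftGen (Fin.castSucc_lt_castSucc_iff.1 h))

noncomputable def joinLast : AdjoinMax (FreeTreeMonoid (Fin n)) →* FreeTreeMonoid (Fin (n + 1)) :=
  AdjoinMax.lift (map Fin.castSucc Fin.strictMono_castSucc) (ftGen (Fin.last n))
    fun _ => ftGen_mul_mul_ftGen_of_isTop Fin.le_last _

noncomputable def equivAdjoinMax :
    FreeTreeMonoid (Fin (n + 1)) ≃* AdjoinMax (FreeTreeMonoid (Fin n)) :=
  (splitLast n).toMulEquiv (joinLast n)
    (hom_ext <| Fin.lastCases (by simp [splitLast, joinLast]) fun j => by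
      simp [splitLast, joinLast])
    (AdjoinMax.hom_ext (hom_ext fun j => by simp [splitLast, joinLast]) (by
      simp [splitLast, joinLast]))

variable {n}

@[simp]
theorem equivAdjoinMax_ftGen_castSucc (j : Fin n) :
    equivAdjoinMax n (ftGen j.castSucc) = of (ftGen j) := by
  simp [equivAdjoinMax, splitLast]

@[simp]
theorem equivAdjoinMax_ftGen_last : equivAdjoinMax n (ftGen (Fin.last n)) = top := by
  simp [equivAdjoinMax, splitLast]

instance finite_fin : ∀ n, Finite (FreeTreeMonoid (Fin n))
  | 0 => inferInstance
  | n + 1 => have := finite_fin n; Finite.of_equiv _ (equivAdjoinMax n).symm.toEquiv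

theorem card_fin : ∀ n, Nat.card (FreeTreeMonoid (Fin n)) = ftCount n
  | 0 => Nat.card_unique
  | n + 1 => by
    rw [Nat.card_congr (equivAdjoinMax n).toEquiv, AdjoinMax.natCard_eq, card_fin n, ftCount]
    ring

theorem card_descentClass_succ (P : Fin (n + 1) → Prop) [DecidablePred P] :
    Nat.card {u : FreeTreeMonoid (Fin (n + 1)) // ∀ i, u * ftGen i = u ↔ P i} =
      Nat.card {v : FreeTreeMonoid (Fin n) // ∀ j, v * ftGen j = v ↔ P j.castSucc} *
        if P (Fin.last n) then ftCount n else 1 := by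
  let S : Set (FreeTreeMonoid (Fin n)) := {v | ∀ j, v * ftGen j = v ↔ P j.castSucc}
  have hmul (u a : FreeTreeMonoid (Fin (n + 1))) :
      u * a = u ↔ equivAdjoinMax n u * equivAdjoinMax n a = equivAdjoinMax n u := by
    rw [← map_mul, EmbeddingLike.apply_eq_iff_eq]
  have e : {u : FreeTreeMonoid (Fin (n + 1)) // ∀ i, u * ftGen i = u ↔ P i} ≃
      {x : AdjoinMax (FreeTreeMonoid (Fin n)) //
        x.rightFactor ∈ S ∧ (x * top = x ↔ P (Fin.last n))} :=
    (equivAdjoinMax n).toEquiv.subtypeEquiv fun u => by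
      simp only [Fin.forall_fin_succ', hmul u, equivAdjoinMax_ftGen_castSucc,
        equivAdjoinMax_ftGen_last, mul_of_eq_self_iff]
      rfl
  by_cases h : P (Fin.last n)
  · simp only [h, iff_true] at e
    rw [Nat.card_congr e, card_rightFactor_mem_and_mul_top_eq_self, card_fin, if_pos h, mul_comm]
    rfl
  · simp only [h, iff_false] at e
    rw [Nat.card_congr e, card_rightFactor_mem_and_mul_top_ne_self, if_neg h, mul_one]
    rfl

theorem card_descentClass (P : Fin n → Prop) [DecidablePred P] :
    Nat.card {u : FreeTreeMonoid (Fin n) // ∀ i, u * ftGen i = u ↔ P i} =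
      ∏ i, if P i then ftCount i else 1 := by
  induction n with
  | zero => simp
  | succ n ih => rw [card_descentClass_succ, ih, Fin.prod_univ_castSucc]; simp

end FreeTreeMonoid

/-- `X = {x₁ < ⋯ < xₙ}` is `Fin n` with `x_{i+1} = ftGen i`, so the factor `a(i−1)` attached to the
descent `i` of the paper is `ftCount i.val` here. -/
theorem freeTreeMonoid_descentClass_card (n : ℕ) :
    (∀ I : Finset (Fin n),
      Nat.card {u : FreeTreeMonoid (Fin n) // ∀ i : Fin n, u * ftGen i = u ↔ i ∈ I} =
        ∏ i ∈ I, ftCount i.val) ∧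
    Nat.card {u : FreeTreeMonoid (Fin n) // ∀ i : Fin n, u * ftGen i = u} =
      ∏ i : Fin n, ftCount i.val := by
  refine ⟨fun I => ?_, by simpa using FreeTreeMonoid.card_descentClass fun _ : Fin n => True⟩
  rw [FreeTreeMonoid.card_descentClass, Finset.prod_ite_mem, Finset.univ_inter]
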